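/- Let X̂ be the set of all norms on ℝⁿ with the Goldman–Iwahori metric d(η,η') = sup_{v≠0}|log(η(v)/η'(v))|. Then the family of closed balls in X̂ satisfies the Helly property. -/

import Mathlib

/-!
If the balls `B(cᵢ, rᵢ)` meet pairwise, then comparing `cᵢ` and `cⱼ` through a common point gives
`e^{-rᵢ} cᵢ ≤ e^{rⱼ} cⱼ` for all `i, j`. Hence `θ = supᵢ e^{-rᵢ} cᵢ` is a norm, and
`e^{-rⱼ} cⱼ ≤ θ ≤ e^{rⱼ} cⱼ` says that `θ` lies in every ball. Finite dimensionality enters only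
through the equivalence of norms, which makes the supremum defining `GIdist` a bounded one.
-/

def IsNorm (𝕂 : Type*) [NormedField 𝕂] {V : Type*} [AddCommGroup V] [Module 𝕂 V]
    (η : V → ℝ) : Prop :=
  (∀ v, 0 ≤ η v) ∧ (∀ v, η v = 0 ↔ v = 0) ∧
    (∀ (α : 𝕂) (v : V), η (α • v) = ‖α‖ * η v) ∧ ∀ u v, η (u + v) ≤ η u + η v

noncomputable def GIdist {V : Type*} [Zero V] (η η' : V → ℝ) : ℝ :=
  ⨆ v : {v : V // v ≠ 0}, |Real.log (η v.1 / η' v.1)|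

open Real

lemma abs_log_div_le_iff {a b r : ℝ} (ha : 0 < a) (hb : 0 < b) :
    |log (a / b)| ≤ r ↔ a ≤ exp r * b ∧ b ≤ exp r * a := by
  have log_div_le_iff : ∀ {x y : ℝ}, 0 < x → 0 < y → (log (x / y) ≤ r ↔ x ≤ exp r * y) :=
    fun hx hy => by rw [log_le_iff_le_exp (div_pos hx hy), div_le_iff₀ hy, mul_comm]
  rw [abs_le, neg_le, ← log_inv, inv_div, log_div_le_iff ha hb, log_div_le_iff hb ha, and_comm]

lemma isNorm_norm {E : Type*} [NormedAddCommGroup E] [NormedSpace ℝ E] :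
    IsNorm ℝ (fun v : E => ‖v‖) :=
  ⟨norm_nonneg, fun _ => norm_eq_zero, norm_smul, norm_add_le⟩

lemma GIdist_nonneg {V : Type*} [Zero V] (η η' : V → ℝ) : 0 ≤ GIdist η η' :=
  Real.iSup_nonneg fun _ => abs_nonneg _

section
variable {V : Type*} [AddCommGroup V] [Module ℝ V] {η : V → ℝ}

namespace IsNorm

lemma map_zero (hη : IsNorm ℝ η) : η 0 = 0 := (hη.2.1 0).2 rfl

lemma pos (hη : IsNorm ℝ η) {v : V} (hv : v ≠ 0) : 0 < η v :=
  (hη.1 v).lt_of_ne fun h => hv ((hη.2.1 v).1 h.symm)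

lemma const_mul (hη : IsNorm ℝ η) {a : ℝ} (ha : 0 < a) : IsNorm ℝ (fun v => a * η v) := by
  refine ⟨fun v => mul_nonneg ha.le (hη.1 v), fun v => ?_, fun α v => ?_, fun u v => ?_⟩
  · rw [mul_eq_zero, hη.2.1 v, or_iff_right ha.ne']
  · simp only [hη.2.2.1, mul_left_comm]
  · rw [← mul_add]; exact mul_le_mul_of_nonneg_left (hη.2.2.2 u v) ha.le

lemma iSup {ι : Type*} [Nonempty ι] {f : ι → V → ℝ} (hf : ∀ i, IsNorm ℝ (f i))
    (hbdd : ∀ v, BddAbove (Set.range fun i => f i v)) : IsNorm ℝ (fun v => ⨆ i, f i v) := by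
  obtain ⟨i₀⟩ := ‹Nonempty ι›
  refine ⟨fun v => Real.iSup_nonneg fun i => (hf i).1 v, fun v => ⟨fun h => ?_, ?_⟩,
    fun α v => ?_, fun u v => ?_⟩
  · by_contra hv
    exact ((hf i₀).pos hv).not_ge (h ▸ le_ciSup (hbdd v) i₀)
  · rintro rfl
    simp only [(hf _).map_zero, ciSup_const]
  · simp only [(hf _).2.2.1, Real.mul_iSup_of_nonneg (norm_nonneg α)]
  · exact ciSup_le fun i => ((hf i).2.2.2 u v).trans
      (add_le_add (le_ciSup (hbdd u) i) (le_ciSup (hbdd v) i))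

lemma exists_le_mul_norm_and_norm_le_mul {E : Type*} [NormedAddCommGroup E] [NormedSpace ℝ E]
    [FiniteDimensional ℝ E] (hη : IsNorm ℝ η) (e : V ≃ₗ[ℝ] E) :
    ∃ C, 0 < C ∧ ∀ v, η v ≤ C * ‖e v‖ ∧ ‖e v‖ ≤ C * η v := by
  let _ : NormedAddCommGroup V := AddGroupNorm.toNormedAddCommGroup
    { toFun := η
      map_zero' := hη.map_zero
      add_le' := hη.2.2.2
      neg' := fun v => by simpa using hη.2.2.1 (-1) v
      eq_zero_of_map_eq_zero' := fun v => (hη.2.1 v).1 }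
  let _ : NormedSpace ℝ V := ⟨fun a v => (hη.2.2.1 a v).le⟩
  have : FiniteDimensional ℝ V := e.symm.finiteDimensional
  obtain ⟨C, hC, hηe⟩ := (LinearMap.toContinuousLinearMap e.symm.toLinearMap).bound
  obtain ⟨D, hD, heη⟩ := (LinearMap.toContinuousLinearMap e.toLinearMap).bound
  refine ⟨max C D, lt_max_of_lt_left hC, fun v => ⟨?_, ?_⟩⟩
  · have hv : ‖v‖ ≤ C * ‖e v‖ := by simpa using hηe (e v)
    exact hv.trans (by gcongr; exact le_max_left C D)
  · exact (heη v).trans (mul_le_mul_of_nonneg_right (le_max_right C D) (hη.1 v))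

lemma exists_le_exp_mul [FiniteDimensional ℝ V] {η' : V → ℝ} (hη : IsNorm ℝ η)
    (hη' : IsNorm ℝ η') : ∃ a, ∀ v, η v ≤ exp a * η' v := by
  let e := (Module.finBasis ℝ V).equivFun
  obtain ⟨C, hC, hCη⟩ := hη.exists_le_mul_norm_and_norm_le_mul e
  obtain ⟨D, hD, hDη'⟩ := hη'.exists_le_mul_norm_and_norm_le_mul e
  refine ⟨log (C * D), fun v => ?_⟩
  rw [exp_log (by positivity)]
  calc η v ≤ C * ‖e v‖ := (hCη v).1
    _ ≤ C * (D * η' v) := by gcongr; exact (hDη' v).2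
    _ = C * D * η' v := by ring

end IsNorm

lemma bddAbove_range_abs_log_div [FiniteDimensional ℝ V] {η' : V → ℝ} (hη : IsNorm ℝ η)
    (hη' : IsNorm ℝ η') :
    BddAbove (Set.range fun v : {v : V // v ≠ 0} => |log (η v / η' v)|) := by
  obtain ⟨a, ha⟩ := hη.exists_le_exp_mul hη'
  obtain ⟨b, hb⟩ := hη'.exists_le_exp_mul hη
  refine ⟨max a b, Set.forall_mem_range.2 fun v => ?_⟩
  rw [abs_log_div_le_iff (hη.pos v.2) (hη'.pos v.2)]
  exact ⟨(ha v).trans (mul_le_mul_of_nonneg_right (exp_le_exp.2 (le_max_left a b)) (hη'.1 v)),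
    (hb v).trans (mul_le_mul_of_nonneg_right (exp_le_exp.2 (le_max_right a b)) (hη.1 v))⟩

-- The conjunct `0 ≤ r` is needed only for `V = 0`, where `GIdist` is the empty supremum `0`.
lemma GIdist_le_iff [FiniteDimensional ℝ V] {η' : V → ℝ} (hη : IsNorm ℝ η) (hη' : IsNorm ℝ η')
    {r : ℝ} : GIdist η η' ≤ r ↔ 0 ≤ r ∧ ∀ v, η v ≤ exp r * η' v ∧ η' v ≤ exp r * η v := by
  constructor
  · intro h
    refine ⟨(GIdist_nonneg η η').trans h, fun v => ?_⟩
    rcases eq_or_ne v 0 with rfl | hv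
    · simp [hη.map_zero, hη'.map_zero]
    · exact (abs_log_div_le_iff (hη.pos hv) (hη'.pos hv)).1
        ((le_ciSup (bddAbove_range_abs_log_div hη hη') ⟨v, hv⟩).trans h)
  · rintro ⟨hr, hbound⟩
    exact Real.iSup_le (fun v => (abs_log_div_le_iff (hη.pos v.2) (hη'.pos v.2)).2 (hbound v)) hr

lemma exp_neg_mul_le_exp_mul_of_GIdist_le [FiniteDimensional ℝ V] {η' θ : V → ℝ} {r s : ℝ}
    (hη : IsNorm ℝ η) (hη' : IsNorm ℝ η') (hθ : IsNorm ℝ θ) (h : GIdist η θ ≤ r)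
    (h' : GIdist η' θ ≤ s) (v : V) : exp (-r) * η v ≤ exp s * η' v :=
  calc exp (-r) * η v ≤ exp (-r) * (exp r * θ v) := by
        gcongr; exact (((GIdist_le_iff hη hθ).1 h).2 v).1
    _ = θ v := by rw [← mul_assoc, ← exp_add, neg_add_cancel, exp_zero, one_mul]
    _ ≤ exp s * η' v := (((GIdist_le_iff hη' hθ).1 h').2 v).2

end

theorem norms_helly_general {n : ℕ} {ι : Type*}
    (c : ι → (Fin n → ℝ) → ℝ) (hc : ∀ i, IsNorm ℝ (c i))
    (r : ι → ℝ)
    (hpair : ∀ i j, ∃ θ, IsNorm ℝ θ ∧ GIdist (c i) θ ≤ r i ∧ GIdist (c j) θ ≤ r j) :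
    ∃ θ, IsNorm ℝ θ ∧ ∀ i, GIdist (c i) θ ≤ r i := by
  rcases isEmpty_or_nonempty ι with hι | hι
  · exact ⟨fun v => ‖v‖, isNorm_norm, isEmptyElim⟩
  have hr : ∀ i, 0 ≤ r i := fun i => by
    obtain ⟨θ, -, hi, -⟩ := hpair i i
    exact (GIdist_nonneg _ _).trans hi
  have hcross : ∀ i j v, exp (-r i) * c i v ≤ exp (r j) * c j v := fun i j v => by
    obtain ⟨θ, hθ, hi, hj⟩ := hpair i j
    exact exp_neg_mul_le_exp_mul_of_GIdist_le (hc i) (hc j) hθ hi hj v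
  have hbdd : ∀ v, BddAbove (Set.range fun i => exp (-r i) * c i v) := fun v =>
    ⟨_, Set.forall_mem_range.2 fun i => hcross i (Classical.arbitrary ι) v⟩
  have hθ := IsNorm.iSup (fun i => (hc i).const_mul (exp_pos (-r i))) hbdd
  refine ⟨_, hθ, fun j =>
    (GIdist_le_iff (hc j) hθ).2 ⟨hr j, fun v => ⟨?_, ciSup_le (hcross · j v)⟩⟩⟩
  calc c j v = exp (r j) * (exp (-r j) * c j v) := by
        rw [← mul_assoc, ← exp_add, add_neg_cancel, exp_zero, one_mul]
    _ ≤ exp (r j) * ⨆ i, exp (-r i) * c i v := by gcongr; exact le_ciSup (hbdd v) j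

/-- Closed balls in the space `X̂` of all norms on `ℝⁿ`, with the
Goldman–Iwahori metric, satisfy the Helly property. -/
theorem norms_helly {n : ℕ} {ι : Type*}
    (c : ι → (Fin n → ℝ) → ℝ) (hc : ∀ i, IsNorm ℝ (c i))
    (r : ι → ℝ) (hr : ∀ i, 0 ≤ r i)
    (hpair : ∀ i j, ∃ θ, IsNorm ℝ θ ∧ GIdist (c i) θ ≤ r i ∧ GIdist (c j) θ ≤ r j) :
    ∃ θ, IsNorm ℝ θ ∧ ∀ i, GIdist (c i) θ ≤ r i :=
  norms_helly_general c hc r hpair
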